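/- The ensemble estimator Ẑ is unbiased: ∫_{X^{T×N}} (∏_{t=1}^T ∏_{i=1}^N q_t(x_tⁱ)) · Ẑ(x) dμ^{⊗TN}(x) = Z. -/

import Mathlib

/-! Under the density `∏ₜ ∏ᵢ qₜ(xₜⁱ)` the particles `xₜⁱ` are independent, `xₜⁱ`
having law `νₜ = qₜ μ`. Hence for every index choice `i : Fin (T + 1) → Fin N` the
selected path `(xₜ^{iₜ})ₜ` has law `⊗ₜ νₜ`, under which the path weight has mean `Z`,
and `Ẑ` averages `N ^ (T + 1)` such paths. -/

open MeasureTheory Finset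

noncomputable section

/- We index time by `Fin (T + 1)`, i.e. the state sequence has length `T + 1 ≥ 1`;
the paper's incremental weights `w_t`, `t = 2, …, T`, become `wt t`, `t : Fin T`. -/

/-- Path weight `w(x_{1:T}) = w₁(x₁) ∏_{t=2}^T w_t(x_{t-1}, x_t)`. -/
def pathW {X : Type*} (T : ℕ) (w1 : X → ℝ) (wt : Fin T → X → X → ℝ)
    (z : Fin (T + 1) → X) : ℝ :=
  w1 (z 0) * ∏ t : Fin T, wt t (z t.castSucc) (z t.succ)

/-- The ensemble estimate `Ẑ(x) = N^{-T} ∑_{i_{1:T} ∈ [N]^T} w(x^{i_{1:T}})`. -/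
def dZhat {X : Type*} (T N : ℕ) (w1 : X → ℝ) (wt : Fin T → X → X → ℝ)
    (x : Fin (T + 1) → Fin N → X) : ℝ :=
  ((N : ℝ) ^ (T + 1))⁻¹ * ∑ i : Fin (T + 1) → Fin N, pathW T w1 wt (fun t => x t (i t))

open scoped ENNReal

namespace MeasureTheory

variable {X : Type*} [MeasurableSpace X]

theorem lintegral_fin_nat_prod_eq_prod {n : ℕ} {μ : Fin n → Measure X} [∀ i, SigmaFinite (μ i)]
    {f : Fin n → X → ℝ≥0∞} (hf : ∀ i, Measurable (f i)) :
    ∫⁻ x, ∏ i, f i (x i) ∂Measure.pi μ = ∏ i, ∫⁻ y, f i y ∂μ i := by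
  induction n with
  | zero => simp
  | succ n ih =>
    calc ∫⁻ x, ∏ i, f i (x i) ∂Measure.pi μ
        = ∫⁻ p : X × (Fin n → X), f 0 p.1 * ∏ i : Fin n, f i.succ (p.2 i)
            ∂(μ 0).prod (Measure.pi fun i => μ i.succ) := by
          rw [← (measurePreserving_piFinSuccAbove μ 0).symm.lintegral_comp_emb
            (MeasurableEquiv.measurableEmbedding _)]
          simp_rw [MeasurableEquiv.piFinSuccAbove_symm_apply, Fin.insertNthEquiv,
            Fin.prod_univ_succ, Fin.insertNth_zero, Equiv.coe_fn_mk, Fin.cons_succ,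
            Fin.cons_zero, cast_eq, Fin.zero_succAbove]
      _ = (∫⁻ y, f 0 y ∂μ 0) * ∫⁻ v : Fin n → X, ∏ i, f i.succ (v i)
            ∂Measure.pi fun i => μ i.succ :=
          lintegral_prod_mul (hf 0).aemeasurable
            (Finset.measurable_prod _ fun (i : Fin n) _ =>
              (hf i.succ).comp (measurable_pi_apply i)).aemeasurable
      _ = ∏ i, ∫⁻ y, f i y ∂μ i := by rw [ih fun i => hf i.succ, Fin.prod_univ_succ]

theorem lintegral_fintype_prod_eq_prod {ι : Type*} [Fintype ι] {μ : ι → Measure X}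
    [∀ i, SigmaFinite (μ i)] {f : ι → X → ℝ≥0∞} (hf : ∀ i, Measurable (f i)) :
    ∫⁻ x, ∏ i, f i (x i) ∂Measure.pi μ = ∏ i, ∫⁻ y, f i y ∂μ i := by
  let e := (Fintype.equivFin ι).symm
  rw [← (measurePreserving_piCongrLeft μ e).lintegral_comp_emb
    (MeasurableEquiv.measurableEmbedding _)]
  simp_rw [← e.prod_comp, MeasurableEquiv.coe_piCongrLeft, Equiv.piCongrLeft_apply_apply]
  exact lintegral_fin_nat_prod_eq_prod fun i => hf (e i)


theorem Measure.pi_withDensity {ι : Type*} [Fintype ι] (μ : ι → Measure X)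
    [∀ i, SigmaFinite (μ i)] {f : ι → X → ℝ≥0∞} (hf : ∀ i, Measurable (f i))
    [∀ i, SigmaFinite ((μ i).withDensity (f i))] :
    Measure.pi (fun i => (μ i).withDensity (f i))
      = (Measure.pi μ).withDensity fun x => ∏ i, f i (x i) := by
  classical
  refine Measure.pi_eq fun s hs => ?_
  have hind : (Set.univ.pi s).indicator (fun x => ∏ i, f i (x i))
      = fun x => ∏ i, (s i).indicator (f i) (x i) := by
    ext x
    simp only [Set.indicator_apply, Set.mem_univ_pi, Fintype.prod_ite_zero]
  rw [withDensity_apply _ (.univ_pi hs), ← lintegral_indicator (.univ_pi hs), hind,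
    lintegral_fintype_prod_eq_prod fun i => (hf i).indicator (hs i)]
  simp only [lintegral_indicator (hs _), withDensity_apply _ (hs _)]

theorem Measure.pi_withDensity_ofReal {ι : Type*} [Fintype ι] (μ : ι → Measure X)
    [∀ i, SigmaFinite (μ i)] {f : ι → X → ℝ} (hf : ∀ i, Measurable (f i))
    (hf0 : ∀ i x, 0 ≤ f i x) :
    Measure.pi (fun i => (μ i).withDensity fun x => ENNReal.ofReal (f i x))
      = (Measure.pi μ).withDensity fun x => ENNReal.ofReal (∏ i, f i (x i)) := by
  simp_rw [Measure.pi_withDensity μ fun i => (hf i).ennreal_ofReal,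
    ENNReal.ofReal_prod_of_nonneg fun i _ => hf0 i _]

theorem integral_withDensity_ofReal {μ : Measure X} {f : X → ℝ} (hf : Measurable f)
    (hf0 : 0 ≤ᵐ[μ] f) (g : X → ℝ) :
    ∫ x, g x ∂μ.withDensity (fun x => ENNReal.ofReal (f x)) = ∫ x, f x * g x ∂μ := by
  rw [integral_withDensity_eq_integral_toReal_smul hf.ennreal_ofReal
    (ae_of_all _ fun _ => ENNReal.ofReal_lt_top)]
  refine integral_congr_ae ?_
  filter_upwards [hf0] with x hx
  rw [ENNReal.toReal_ofReal hx, smul_eq_mul]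

theorem integrable_withDensity_ofReal_iff {μ : Measure X} {f : X → ℝ} (hf : Measurable f)
    (hf0 : 0 ≤ᵐ[μ] f) {g : X → ℝ} :
    Integrable g (μ.withDensity fun x => ENNReal.ofReal (f x))
      ↔ Integrable (fun x => f x * g x) μ := by
  rw [integrable_withDensity_iff_integrable_smul' hf.ennreal_ofReal
    (ae_of_all _ fun _ => ENNReal.ofReal_lt_top)]
  refine integrable_congr ?_
  filter_upwards [hf0] with x hx
  rw [ENNReal.toReal_ofReal hx, smul_eq_mul]

theorem isProbabilityMeasure_withDensity_ofReal {μ : Measure X} {f : X → ℝ}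
    (hf0 : 0 ≤ᵐ[μ] f) (hf1 : ∫ x, f x ∂μ = 1) :
    IsProbabilityMeasure (μ.withDensity fun x => ENNReal.ofReal (f x)) := by
  constructor
  rw [withDensity_apply _ .univ, Measure.restrict_univ,
    ← ofReal_integral_eq_lintegral_ofReal (integrable_of_integral_eq_one hf1) hf0, hf1,
    ENNReal.ofReal_one]

section Pi

variable {ι : Type*} [Fintype ι] {μ : ι → Measure X} [∀ i, SigmaFinite (μ i)]
  {f : ι → X → ℝ}

theorem integral_pi_withDensity_ofReal (hf : ∀ i, Measurable (f i)) (hf0 : ∀ i x, 0 ≤ f i x)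
    (g : (ι → X) → ℝ) :
    ∫ x, g x ∂Measure.pi (fun i => (μ i).withDensity fun x => ENNReal.ofReal (f i x))
      = ∫ x, (∏ i, f i (x i)) * g x ∂Measure.pi μ := by
  rw [Measure.pi_withDensity_ofReal μ hf hf0, integral_withDensity_ofReal (by fun_prop)
    (ae_of_all _ fun x => prod_nonneg fun i _ => hf0 i (x i))]

theorem integrable_pi_withDensity_ofReal_iff (hf : ∀ i, Measurable (f i))
    (hf0 : ∀ i x, 0 ≤ f i x) {g : (ι → X) → ℝ} :
    Integrable g (Measure.pi fun i => (μ i).withDensity fun x => ENNReal.ofReal (f i x))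
      ↔ Integrable (fun x => (∏ i, f i (x i)) * g x) (Measure.pi μ) := by
  rw [Measure.pi_withDensity_ofReal μ hf hf0, integrable_withDensity_ofReal_iff (by fun_prop)
    (ae_of_all _ fun x => prod_nonneg fun i _ => hf0 i (x i))]

end Pi

section Selection

variable {ι κ : Type*} [Fintype ι] [Fintype κ] (ν : ι → Measure X)
  [∀ i, IsProbabilityMeasure (ν i)]

theorem measurePreserving_pi_eval_pi (σ : ι → κ) :
    MeasurePreserving (fun (x : ι → κ → X) i => x i (σ i))
      (Measure.pi fun i => Measure.pi fun _ : κ => ν i) (Measure.pi ν) :=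
  measurePreserving_pi (fun i => Measure.pi fun _ : κ => ν i) ν fun i =>
    measurePreserving_eval (fun _ : κ => ν i) (σ i)

theorem integral_comp_pi_eval_pi (σ : ι → κ) {g : (ι → X) → ℝ}
    (hg : AEStronglyMeasurable g (Measure.pi ν)) :
    ∫ x, g (fun i => x i (σ i)) ∂(Measure.pi fun i => Measure.pi fun _ : κ => ν i)
      = ∫ y, g y ∂Measure.pi ν := by
  have hσ := measurePreserving_pi_eval_pi ν σ
  rw [← hσ.map_eq] at hg ⊢
  exact (integral_map hσ.measurable.aemeasurable hg).symm

theorem integral_sum_comp_pi_eval_pi [DecidableEq ι] {g : (ι → X) → ℝ}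
    (hg : Integrable g (Measure.pi ν)) :
    ∫ x, ∑ σ : ι → κ, g (fun i => x i (σ i))
        ∂(Measure.pi fun i => Measure.pi fun _ : κ => ν i)
      = (Fintype.card κ : ℝ) ^ Fintype.card ι * ∫ y, g y ∂Measure.pi ν := by
  have hσ := measurePreserving_pi_eval_pi (κ := κ) ν
  have hσint : ∀ σ : ι → κ, Integrable (fun x => g fun i => x i (σ i))
      (Measure.pi fun i => Measure.pi fun _ : κ => ν i) :=
    fun σ => (hσ σ).integrable_comp_of_integrable hg
  rw [integral_finsetSum _ fun σ _ => hσint σ]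
  simp only [integral_comp_pi_eval_pi ν _ hg.aestronglyMeasurable, sum_const, card_univ,
    Fintype.card_pi, prod_const, nsmul_eq_mul]
  norm_cast

end Selection

end MeasureTheory

theorem ers_dynamic_Zhat_unbiased_general
    {X : Type*} [MeasurableSpace X] (μ : Measure X) [SigmaFinite μ]
    (T N : ℕ) (hN : 1 ≤ N)
    (q : Fin (T + 1) → X → ℝ)
    (hqm : ∀ t, Measurable (q t)) (hqpos : ∀ t y, 0 < q t y)
    (hqprob : ∀ t, ∫ y, q t y ∂μ = 1)
    (w1 : X → ℝ) (wt : Fin T → X → X → ℝ)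
    (Z : ℝ)
    (hZ : Z = ∫ z : Fin (T + 1) → X, pathW T w1 wt z * ∏ t, q t (z t)
        ∂(Measure.pi fun _ : Fin (T + 1) => μ))
    (hγint : Integrable (fun z : Fin (T + 1) → X => pathW T w1 wt z * ∏ t, q t (z t))
        (Measure.pi fun _ : Fin (T + 1) => μ)) :
    ∫ x : Fin (T + 1) → Fin N → X,
        (∏ t, ∏ i, q t (x t i)) * dZhat T N w1 wt x
        ∂(Measure.pi fun _ : Fin (T + 1) => Measure.pi fun _ : Fin N => μ)
      = Z := by
  set ν : Fin (T + 1) → Measure X := fun t => μ.withDensity fun y => ENNReal.ofReal (q t y)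
  have hq0 : ∀ t y, 0 ≤ q t y := fun t y => (hqpos t y).le
  have : ∀ t, IsProbabilityMeasure (ν t) := fun t =>
    isProbabilityMeasure_withDensity_ofReal (ae_of_all _ (hq0 t)) (hqprob t)
  have hw_int : Integrable (pathW T w1 wt) (Measure.pi ν) := by
    rw [integrable_pi_withDensity_ofReal_iff hqm hq0]
    simpa only [mul_comm] using hγint
  have hw_mean : ∫ z, pathW T w1 wt z ∂Measure.pi ν = Z := by
    rw [integral_pi_withDensity_ofReal hqm hq0, hZ]
    simp_rw [mul_comm]
  have hgrid : Measure.pi (fun t => Measure.pi fun _ : Fin N => ν t)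
      = Measure.pi fun t => (Measure.pi fun _ => μ).withDensity
          fun v => ENNReal.ofReal (∏ i, q t (v i)) :=
    congrArg Measure.pi <| funext fun t => Measure.pi_withDensity_ofReal _ (fun _ => hqm t)
      fun _ => hq0 t
  rw [← integral_pi_withDensity_ofReal (f := fun t (v : Fin N → X) => ∏ i, q t (v i))
    (fun t => by fun_prop) (fun t v => prod_nonneg fun i _ => hq0 t (v i)), ← hgrid]
  simp only [dZhat]
  rw [integral_const_mul, integral_sum_comp_pi_eval_pi ν hw_int, hw_mean,
    Fintype.card_fin, Fintype.card_fin]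
  have : (N : ℝ) ≠ 0 := Nat.cast_ne_zero.mpr (by omega)
  field_simp

/-- The ensemble estimator `Ẑ` is unbiased:
`∫ (∏ₜ∏ᵢ qₜ(xₜⁱ)) Ẑ(x) dμ^{⊗TN}(x) = Z`. -/
theorem ers_dynamic_Zhat_unbiased
    {X : Type*} [MeasurableSpace X] (μ : Measure X) [SigmaFinite μ]
    (T N : ℕ) (hN : 1 ≤ N)
    (q : Fin (T + 1) → X → ℝ)
    (hqm : ∀ t, Measurable (q t)) (hqpos : ∀ t y, 0 < q t y)
    (hqprob : ∀ t, ∫ y, q t y ∂μ = 1)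
    (w1 : X → ℝ) (wt : Fin T → X → X → ℝ)
    (hw1m : Measurable w1) (hwtm : ∀ t, Measurable (Function.uncurry (wt t)))
    (hw1nn : ∀ y, 0 ≤ w1 y) (hwtnn : ∀ t y y', 0 ≤ wt t y y')
    (Z : ℝ)
    (hZ : Z = ∫ z : Fin (T + 1) → X, pathW T w1 wt z * ∏ t, q t (z t)
        ∂(Measure.pi fun _ : Fin (T + 1) => μ))
    (hZpos : 0 < Z)
    (hγint : Integrable (fun z : Fin (T + 1) → X => pathW T w1 wt z * ∏ t, q t (z t))
        (Measure.pi fun _ : Fin (T + 1) => μ)) :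
    ∫ x : Fin (T + 1) → Fin N → X,
        (∏ t, ∏ i, q t (x t i)) * dZhat T N w1 wt x
        ∂(Measure.pi fun _ : Fin (T + 1) => Measure.pi fun _ : Fin N => μ)
      = Z :=
  ers_dynamic_Zhat_unbiased_general μ T N hN q hqm hqpos hqprob w1 wt Z hZ hγint
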